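/- Correctness of the nested anonymous-header construction for sender-receiver anonymity: let s_0, …, s_{l−1} ∈ {0,1}^k, FS_0, …, FS_{l−1} ∈ {0,1}^{|FS|}, and let A ∈ {0,1}^{rc} be a nested anonymous header; let (FS_i, γ_i, β_i), 0 ≤ i ≤ l−1, be the headers produced by the nested construction (Algorithm 5). Then: (a) for every 0 ≤ i ≤ l−1 the MAC verification succeeds, i.e., γ_i = MAC(h_MAC(s_i); FS_i ‖ β_i); (b) for every 0 ≤ i ≤ l−2, per-hop processing of the header at node i yields exactly the header constructed for node i+1, i.e., (β_i ‖ 0^{c}) ⊕ PRG0(h_PRG0(s_i)) = FS_{i+1} ‖ γ_{i+1} ‖ β_{i+1}; and (c) the first rc bits of the output of the per-hop processing at the final node l−1 equal A, i.e., ((β_{l−1} ‖ 0^{c}) ⊕ PRG0(h_PRG0(s_{l−1})))_[0..rc−1] = A, so the rendezvous node recovers the nested header A. -/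

import Mathlib

/-- Bit strings: finite sequences of bits. -/
abbrev BS : Type := List Bool

/-- Bitwise XOR of (equal-length) bit strings. -/
def bxor (σ τ : BS) : BS := List.zipWith xor σ τ

/-- Substring from bit position `a` through `b` inclusive (0-indexed). -/
def substr (σ : BS) (a b : ℕ) : BS := (σ.drop a).take (b + 1 - a)

/-- All-zero string of length `a`. -/
def zeros (a : ℕ) : BS := List.replicate a false

/-!
Write `Pᵢ` for the keystream `PRG0 (h_PRG0 sᵢ)` of node `i`. By downward induction on `i`, the
last `i·c` bits of `βᵢ` are the padding `φᵢ`. Processing at node `i` XORs `βᵢ ‖ 0^c` with `Pᵢ`: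
on the first `(2r-1)c` bits this undoes the mask of Algorithm 5 and returns `FSᵢ₊₁ ‖ γᵢ₊₁`
followed by all but the last `c` bits of `βᵢ₊₁`; on the appended zeros it returns the last block
of `Pᵢ`, which is also the last block of `φᵢ₊₁`, hence of `βᵢ₊₁`. At the last node the first `rc`
bits of `βₗ₋₁` are `A` masked by the first `rc` bits of `Pₗ₋₁`, and the mask cancels. The MAC
values enter only through their length.
-/

theorem length_bxor (σ τ : BS) : (bxor σ τ).length = min σ.length τ.length :=
  List.length_zipWith

theorem length_zeros (n : ℕ) : (zeros n).length = n :=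
  List.length_replicate

theorem take_bxor (σ τ : BS) (n : ℕ) : (bxor σ τ).take n = bxor (σ.take n) (τ.take n) :=
  List.take_zipWith

theorem drop_bxor (σ τ : BS) (n : ℕ) : (bxor σ τ).drop n = bxor (σ.drop n) (τ.drop n) :=
  List.drop_zipWith

theorem bxor_append {σ σ' τ τ' : BS} (h : σ.length = τ.length) :
    bxor (σ ++ σ') (τ ++ τ') = bxor σ τ ++ bxor σ' τ' :=
  List.zipWith_append h

theorem bxor_bxor_cancel : ∀ {σ τ : BS}, σ.length ≤ τ.length → bxor (bxor σ τ) τ = σ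
  | [], _, _ => rfl
  | _ :: _, [], h => by simp at h
  | a :: σ, b :: τ, h => by
    simp only [bxor, List.zipWith_cons_cons, Bool.xor_assoc, Bool.xor_self, Bool.xor_false,
      List.cons.injEq, true_and]
    exact bxor_bxor_cancel (by simpa using h)

theorem zeros_bxor : ∀ {n : ℕ} {τ : BS}, τ.length ≤ n → bxor (zeros n) τ = τ
  | _, [], _ => by simp [bxor]
  | 0, _ :: _, h => by simp at h
  | n + 1, b :: τ, h => by
    simp only [zeros, List.replicate_succ, bxor, List.zipWith_cons_cons, Bool.false_xor,
      List.cons.injEq, true_and]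
    exact zeros_bxor (by simpa using h)

theorem bxor_append_zeros_bxor_take {X P : BS} {m n : ℕ} (hX : X.length = m)
    (hm : m ≤ P.length) (hn : P.length ≤ m + n) :
    bxor (bxor X (P.take m) ++ zeros n) P = X ++ P.drop m := by
  conv_lhs => enter [2]; rw [← P.take_append_drop m]
  rw [bxor_append (by rw [length_bxor, List.length_take]; omega),
    bxor_bxor_cancel (by rw [List.length_take]; omega),
    zeros_bxor (by rw [List.length_drop]; omega)]

theorem substr_zero_sub_one (σ : BS) {n : ℕ} (hn : 0 < n) : substr σ 0 (n - 1) = σ.take n := by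
  rw [substr, List.drop_zero, Nat.sub_add_cancel hn, Nat.sub_zero]

theorem substr_eq_drop {σ : BS} {b : ℕ} (a : ℕ) (h : σ.length ≤ b + 1) :
    substr σ a b = σ.drop a :=
  List.take_of_length_le (by rw [List.length_drop]; omega)

/-- Algorithm 5 with keystreams `P i`, where `σ_[0..n-1]` is `σ.take n` and `σ_[a..end]` is
`σ.drop a`. -/
structure IsNestedHeaders (r c l : ℕ) (P FS γ : ℕ → BS) (A ρ : BS) (φ β : ℕ → BS) : Prop where
  l_le_r : l ≤ r
  length_keystream : ∀ i, (P i).length = 2 * r * c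
  length_FS_append_γ : ∀ i, i < l → (FS i ++ γ i).length = c
  length_A : A.length = r * c
  length_ρ : ρ.length = (r - l) * c
  padding_zero : φ 0 = []
  padding_succ : ∀ i, i + 1 < l →
    φ (i + 1) = bxor (φ i ++ zeros c) ((P i).drop ((2 * r - 1 - i) * c))
  header_last : β (l - 1) = bxor (A ++ ρ) ((P (l - 1)).take ((2 * r - l) * c)) ++ φ (l - 1)
  header_succ : ∀ i, i + 1 < l →
    β i = bxor (FS (i + 1) ++ γ (i + 1) ++ (β (i + 1)).take ((2 * r - 2) * c))
      ((P i).take ((2 * r - 1) * c))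

namespace IsNestedHeaders

variable {r c l : ℕ} {P FS γ φ β : ℕ → BS} {A ρ : BS}

theorem length_take_keystream (H : IsNestedHeaders r c l P FS γ A ρ φ β) (i : ℕ) {n : ℕ}
    (hn : n ≤ 2 * r) : ((P i).take (n * c)).length = n * c := by
  rw [List.length_take, H.length_keystream, min_eq_left (Nat.mul_le_mul_right c hn)]

theorem length_drop_keystream (H : IsNestedHeaders r c l P FS γ A ρ φ β) (i n : ℕ) :
    ((P i).drop (n * c)).length = (2 * r - n) * c := by
  rw [List.length_drop, H.length_keystream, Nat.sub_mul]

theorem length_padding (H : IsNestedHeaders r c l P FS γ A ρ φ β) :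
    ∀ i, i < l → (φ i).length = i * c
  | 0, _ => by simp [H.padding_zero]
  | i + 1, hi => by
    have := H.l_le_r
    rw [H.padding_succ i hi, length_bxor, List.length_append, H.length_padding i (by omega),
      length_zeros, H.length_drop_keystream, ← Nat.succ_mul,
      show 2 * r - (2 * r - 1 - i) = i + 1 by omega, min_self]

theorem take_padding_succ (H : IsNestedHeaders r c l P FS γ A ρ φ β) {i : ℕ} (hi : i + 1 < l) :
    (φ (i + 1)).take (i * c) = bxor (φ i) (((P i).drop ((2 * r - 1 - i) * c)).take (i * c)) := by
  rw [H.padding_succ i hi, take_bxor, List.take_left' (H.length_padding i (by omega))]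

theorem drop_padding_succ (H : IsNestedHeaders r c l P FS γ A ρ φ β) {i : ℕ} (hi : i + 1 < l) :
    (φ (i + 1)).drop (i * c) = (P i).drop ((2 * r - 1) * c) := by
  have := H.l_le_r
  rw [H.padding_succ i hi, drop_bxor, List.drop_left' (H.length_padding i (by omega)),
    List.drop_drop, ← Nat.add_mul, show 2 * r - 1 - i + i = 2 * r - 1 by omega]
  exact zeros_bxor (by rw [H.length_drop_keystream, show 2 * r - (2 * r - 1) = 1 by omega,
    one_mul])

theorem length_mask_last (H : IsNestedHeaders r c l P FS γ A ρ φ β) :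
    (bxor (A ++ ρ) ((P (l - 1)).take ((2 * r - l) * c))).length = (2 * r - l) * c := by
  have := H.l_le_r
  rw [length_bxor, List.length_append, H.length_A, H.length_ρ, ← Nat.add_mul,
    show r + (r - l) = 2 * r - l by omega, H.length_take_keystream _ (by omega), min_self]

theorem length_header (H : IsNestedHeaders r c l P FS γ A ρ φ β) :
    ∀ j, j < l → (β j).length = (2 * r - 1) * c := by
  have := H.l_le_r
  intro j hj
  induction Nat.le_sub_one_of_lt hj using Nat.decreasingInduction with
  | self =>
    rw [H.header_last, List.length_append, H.length_mask_last, H.length_padding _ hj,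
      ← Nat.add_mul, show 2 * r - l + (l - 1) = 2 * r - 1 by omega]
  | of_succ j hjl ih =>
    rw [H.header_succ j (by omega), length_bxor, List.length_append,
      H.length_FS_append_γ _ (by omega), List.length_take, ih (by omega),
      min_eq_left (Nat.mul_le_mul_right c (by omega)), H.length_take_keystream _ (by omega),
      ← one_add_mul, show 1 + (2 * r - 2) = 2 * r - 1 by omega, min_self]

theorem drop_header (H : IsNestedHeaders r c l P FS γ A ρ φ β) :
    ∀ j, j < l → (β j).drop ((2 * r - 1 - j) * c) = φ j := by
  have := H.l_le_r
  intro j hj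
  induction Nat.le_sub_one_of_lt hj using Nat.decreasingInduction with
  | self =>
    rw [H.header_last, show 2 * r - 1 - (l - 1) = 2 * r - l by omega,
      List.drop_left' H.length_mask_last]
  | of_succ j hjl ih =>
    have hj1 : j + 1 < l := by omega
    have hmsg : (FS (j + 1) ++ γ (j + 1) ++ (β (j + 1)).take ((2 * r - 2) * c)).drop
        ((2 * r - 1 - j) * c) = (φ (j + 1)).take (j * c) := by
      rw [show (2 * r - 1 - j) * c = (FS (j + 1) ++ γ (j + 1)).length + (2 * r - 1 - (j + 1)) * c
          by rw [H.length_FS_append_γ _ hj1, ← one_add_mul]; congr 1; omega,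
        List.drop_length_add_append, List.drop_take, ih hj1, ← Nat.sub_mul]
      congr 2; omega
    have hmask : ((P j).take ((2 * r - 1) * c)).drop ((2 * r - 1 - j) * c)
        = ((P j).drop ((2 * r - 1 - j) * c)).take (j * c) := by
      rw [List.drop_take, ← Nat.sub_mul]
      congr 2; omega
    rw [H.header_succ j hj1, drop_bxor, hmsg, hmask, H.take_padding_succ hj1]
    refine bxor_bxor_cancel ?_
    rw [H.length_padding j (by omega), List.length_take, H.length_drop_keystream]
    exact le_min le_rfl (Nat.mul_le_mul_right c (by omega))

theorem process_header_succ (H : IsNestedHeaders r c l P FS γ A ρ φ β) {i : ℕ} (hi : i + 1 < l) :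
    bxor (β i ++ zeros c) (P i) = FS (i + 1) ++ γ (i + 1) ++ β (i + 1) := by
  have := H.l_le_r
  have hmsg : (FS (i + 1) ++ γ (i + 1) ++ (β (i + 1)).take ((2 * r - 2) * c)).length
      = (2 * r - 1) * c := by
    rw [List.length_append, H.length_FS_append_γ _ hi, List.length_take, H.length_header _ hi,
      min_eq_left (Nat.mul_le_mul_right c (by omega)), ← one_add_mul]
    congr 1; omega
  have htail : (β (i + 1)).drop ((2 * r - 2) * c) = (P i).drop ((2 * r - 1) * c) := by
    rw [← H.drop_padding_succ hi, ← H.drop_header _ hi, List.drop_drop, ← Nat.add_mul]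
    congr 2; omega
  rw [H.header_succ i hi, bxor_append_zeros_bxor_take hmsg
    (by rw [H.length_keystream]; exact Nat.mul_le_mul_right c (by omega))
    (by rw [H.length_keystream, ← Nat.succ_mul]; exact Nat.mul_le_mul_right c (by omega)),
    ← htail, List.append_assoc _ (List.take _ _), List.take_append_drop]

theorem process_header_last (H : IsNestedHeaders r c l P FS γ A ρ φ β) (hl : 0 < l) :
    (bxor (β (l - 1) ++ zeros c) (P (l - 1))).take (r * c) = A := by
  have := H.l_le_r
  have hrc : ∀ n, r ≤ n → r * c ≤ n * c := fun n h => Nat.mul_le_mul_right c h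
  have hprefix : (β (l - 1)).take (r * c) = bxor A ((P (l - 1)).take (r * c)) := by
    rw [H.header_last,
      List.take_append_of_le_length (by rw [H.length_mask_last]; exact hrc _ (by omega)),
      take_bxor, List.take_left' H.length_A, List.take_take, min_eq_left (hrc _ (by omega))]
  rw [take_bxor, List.take_append_of_le_length
    (by rw [H.length_header _ (by omega)]; exact hrc _ (by omega)), hprefix]
  exact bxor_bxor_cancel (by rw [H.length_A, H.length_take_keystream _ (by omega)])

end IsNestedHeaders

theorem nested_ahdr_correctness_general
    (k fsl r l : ℕ) (hk : 1 ≤ k)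
    (hl1 : 1 ≤ l) (hlr : l ≤ r)
    (c : ℕ) (hc : c = fsl + k)
    (PRG0 : BS → BS) (hPRG0len : ∀ x, (PRG0 x).length = 2 * r * c)
    (MAC : BS → BS → BS) (hMAClen : ∀ key msg, (MAC key msg).length = k)
    (hPRG0 hMAC : BS → BS)
    (s FS : ℕ → BS)
    (hFS : ∀ i, i < l → (FS i).length = fsl)
    -- the nested anonymous header
    (A : BS) (hA : A.length = r * c)
    -- the nested construction (Algorithm 5)
    (φ β γ : ℕ → BS)
    (hφ0 : φ 0 = [])
    (hφ : ∀ i, i + 1 < l → φ (i + 1) =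
      bxor (φ i ++ zeros c)
        (substr (PRG0 (hPRG0 (s i))) ((2 * r - 1 - i) * c) (2 * r * c - 1)))
    (ρ : BS) (hρ : ρ.length = (r - l) * c)
    (hβlast : β (l - 1) =
      bxor (A ++ ρ) (substr (PRG0 (hPRG0 (s (l - 1)))) 0 ((2 * r - l) * c - 1))
        ++ φ (l - 1))
    (hγlast : γ (l - 1) = MAC (hMAC (s (l - 1))) (FS (l - 1) ++ β (l - 1)))
    (hβ : ∀ i, i + 1 < l → β i =
      bxor (FS (i + 1) ++ γ (i + 1) ++ substr (β (i + 1)) 0 ((2 * r - 2) * c - 1))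
           (substr (PRG0 (hPRG0 (s i))) 0 ((2 * r - 1) * c - 1)))
    (hγ : ∀ i, i + 1 < l → γ i = MAC (hMAC (s i)) (FS i ++ β i)) :
    (∀ i, i < l → γ i = MAC (hMAC (s i)) (FS i ++ β i)) ∧
      (∀ i, i + 1 < l →
        bxor (β i ++ zeros c) (PRG0 (hPRG0 (s i)))
          = FS (i + 1) ++ γ (i + 1) ++ β (i + 1)) ∧
      substr (bxor (β (l - 1) ++ zeros c) (PRG0 (hPRG0 (s (l - 1)))))
          0 (r * c - 1) = A := by
  have hblock : ∀ n, 0 < n → 0 < n * c := fun n hn => Nat.mul_pos hn (by omega)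
  have hmac : ∀ i, i < l → γ i = MAC (hMAC (s i)) (FS i ++ β i) := fun i hi =>
    if h : i + 1 < l then hγ i h else by rw [show i = l - 1 by omega]; exact hγlast
  have H : IsNestedHeaders r c l (fun i => PRG0 (hPRG0 (s i))) FS γ A ρ φ β :=
    { l_le_r := hlr
      length_keystream := fun _ => hPRG0len _
      length_FS_append_γ := fun i hi => by rw [List.length_append, hFS i hi, hmac i hi, hMAClen, hc]
      length_A := hA
      length_ρ := hρ
      padding_zero := hφ0
      padding_succ := fun i hi => by rw [hφ i hi, substr_eq_drop _ (by rw [hPRG0len]; omega)]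
      header_last := by rw [hβlast, substr_zero_sub_one _ (hblock _ (by omega))]
      header_succ := fun i hi => by
        rw [hβ i hi, substr_zero_sub_one _ (hblock _ (by omega)),
          substr_zero_sub_one _ (hblock _ (by omega))] }
  rw [substr_zero_sub_one _ (hblock _ (by omega))]
  exact ⟨hmac, fun i hi => H.process_header_succ hi, H.process_header_last hl1⟩

/-- Correctness of the nested anonymous-header construction
(Algorithm 5) for sender-receiver anonymity: (a) every per-hop MAC
verification succeeds; (b) per-hop processing of the header at node `i`
yields exactly the header constructed for node `i+1`; and (c) the first `rc`
bits of the output of the per-hop processing at the final node `l-1` equal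
the nested header `A`, so the rendezvous node recovers `A`. -/
theorem nested_ahdr_correctness
    (k fsl r l : ℕ) (hk : 1 ≤ k) (hfsl : k ≤ fsl) (hr : 1 ≤ r)
    (hl1 : 1 ≤ l) (hlr : l ≤ r)
    (c : ℕ) (hc : c = fsl + k)
    (PRG0 : BS → BS) (hPRG0len : ∀ x, (PRG0 x).length = 2 * r * c)
    (MAC : BS → BS → BS) (hMAClen : ∀ key msg, (MAC key msg).length = k)
    (hPRG0 hMAC : BS → BS)
    (hhPRG0len : ∀ x, (hPRG0 x).length = k) (hhMAClen : ∀ x, (hMAC x).length = k)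
    (s FS : ℕ → BS)
    (hs : ∀ i, i < l → (s i).length = k)
    (hFS : ∀ i, i < l → (FS i).length = fsl)
    -- the nested anonymous header
    (A : BS) (hA : A.length = r * c)
    -- the nested construction (Algorithm 5)
    (φ β γ : ℕ → BS)
    (hφ0 : φ 0 = [])
    (hφ : ∀ i, i + 1 < l → φ (i + 1) =
      bxor (φ i ++ zeros c)
        (substr (PRG0 (hPRG0 (s i))) ((2 * r - 1 - i) * c) (2 * r * c - 1)))
    (ρ : BS) (hρ : ρ.length = (r - l) * c)
    (hβlast : β (l - 1) =
      bxor (A ++ ρ) (substr (PRG0 (hPRG0 (s (l - 1)))) 0 ((2 * r - l) * c - 1))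
        ++ φ (l - 1))
    (hγlast : γ (l - 1) = MAC (hMAC (s (l - 1))) (FS (l - 1) ++ β (l - 1)))
    (hβ : ∀ i, i + 1 < l → β i =
      bxor (FS (i + 1) ++ γ (i + 1) ++ substr (β (i + 1)) 0 ((2 * r - 2) * c - 1))
           (substr (PRG0 (hPRG0 (s i))) 0 ((2 * r - 1) * c - 1)))
    (hγ : ∀ i, i + 1 < l → γ i = MAC (hMAC (s i)) (FS i ++ β i)) :
    (∀ i, i < l → γ i = MAC (hMAC (s i)) (FS i ++ β i)) ∧
      (∀ i, i + 1 < l →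
        bxor (β i ++ zeros c) (PRG0 (hPRG0 (s i)))
          = FS (i + 1) ++ γ (i + 1) ++ β (i + 1)) ∧
      substr (bxor (β (l - 1) ++ zeros c) (PRG0 (hPRG0 (s (l - 1)))))
          0 (r * c - 1) = A :=
  nested_ahdr_correctness_general k fsl r l hk hl1 hlr c hc PRG0 hPRG0len MAC hMAClen hPRG0 hMAC s
    FS hFS A hA φ β γ hφ0 hφ ρ hρ hβlast hγlast hβ hγ
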